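/- arXiv:2410.08440 — 5 statements merged into one kernel-verified Lean document; each statement's English description precedes it below -/
import Mathlib

section
/- Let M be a real n×n matrix that is row diagonally dominant, i.e., |M_{ii}| ≥ Σ_{j≠i} |M_{ij}| for every index i. Let J = { i : |M_{ii}| > Σ_{j≠i} |M_{ij}| } be the set of strictly diagonally dominant rows. Suppose J is nonempty and that for every index i ∉ J there exists a finite sequence of indices i = i_1, i_2, …, i_s with M_{i_k i_{k+1}} ≠ 0 for all k = 1,…,s−1 and i_s ∈ J. Then M is nonsingular, i.e., det M ≠ 0. -/
/-!
If `M v = 0` with `v ≠ 0`, look at an index `i` where `|v i|` is maximal. Row `i` of the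
equation gives `|M i i| |v i| ≤ ∑_{j ≠ i} |M i j| |v j|`, and diagonal dominance forces
equality throughout: row `i` is not strictly dominant, and `|v j| = |v i|` whenever
`M i j ≠ 0`. So the set of maximal indices is closed under following nonzero entries, and the
chain from a maximal index would have to reach a strictly dominant row inside that set.
-/

open Finset

namespace Matrix

variable {ι K : Type*} [Fintype ι] [DecidableEq ι] [CommRing K] [LinearOrder K]
  [IsStrictOrderedRing K] {M : Matrix ι ι K} {v : ι → K} {i : ι}

theorem abs_diag_mul_abs_le_sum_erase_of_mulVec_eq_zero (hMv : M *ᵥ v = 0) (i : ι) :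
    |M i i| * |v i| ≤ ∑ j ∈ univ.erase i, |M i j| * |v j| := by
  have hrow : M i i * v i + ∑ j ∈ univ.erase i, M i j * v j = 0 := by
    rw [add_sum_erase _ (fun j => M i j * v j) (mem_univ i)]
    simpa [mulVec, dotProduct] using congrFun hMv i
  calc |M i i| * |v i| = |∑ j ∈ univ.erase i, M i j * v j| := by
        rw [← abs_mul, eq_neg_of_add_eq_zero_left hrow, abs_neg]
    _ ≤ ∑ j ∈ univ.erase i, |M i j * v j| := abs_sum_le_sum_abs _ _
    _ = ∑ j ∈ univ.erase i, |M i j| * |v j| := by simp only [abs_mul]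

/-- When `i` is a maximal coordinate and row `i` is dominant, both summands are nonnegative,
so both vanish. -/
theorem sum_erase_abs_mul_sub_add_gap_mul_nonpos (hMv : M *ᵥ v = 0) (i : ι) :
    ∑ j ∈ univ.erase i, |M i j| * (|v i| - |v j|)
      + (|M i i| - ∑ j ∈ univ.erase i, |M i j|) * |v i| ≤ 0 := by
  have h := abs_diag_mul_abs_le_sum_erase_of_mulVec_eq_zero hMv i
  simp only [mul_sub, sub_mul, sum_sub_distrib, sum_mul] at h ⊢
  linarith

variable (hMv : M *ᵥ v = 0) (hdom : ∑ j ∈ univ.erase i, |M i j| ≤ |M i i|)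
  (hmax : ∀ j, |v j| ≤ |v i|)
include hMv hdom hmax

theorem sum_erase_abs_mul_sub_eq_zero_of_mulVec_eq_zero :
    ∑ j ∈ univ.erase i, |M i j| * (|v i| - |v j|) = 0 ∧
      (|M i i| - ∑ j ∈ univ.erase i, |M i j|) * |v i| = 0 := by
  have hloss : 0 ≤ ∑ j ∈ univ.erase i, |M i j| * (|v i| - |v j|) :=
    sum_nonneg fun j _ => mul_nonneg (abs_nonneg _) (sub_nonneg.2 (hmax j))
  have hgap : 0 ≤ (|M i i| - ∑ j ∈ univ.erase i, |M i j|) * |v i| :=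
    mul_nonneg (sub_nonneg.2 hdom) (abs_nonneg _)
  exact (add_eq_zero_iff_of_nonneg hloss hgap).1
    ((sum_erase_abs_mul_sub_add_gap_mul_nonpos hMv i).antisymm (add_nonneg hloss hgap))

theorem abs_eq_of_mulVec_eq_zero_of_ne_zero {j : ι} (hij : M i j ≠ 0) : |v j| = |v i| := by
  obtain rfl | hji := eq_or_ne j i
  · rfl
  have hterm := (sum_eq_zero_iff_of_nonneg fun k _ =>
      mul_nonneg (abs_nonneg (M i k)) (sub_nonneg.2 (hmax k))).1
    (sum_erase_abs_mul_sub_eq_zero_of_mulVec_eq_zero hMv hdom hmax).1 j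
    (mem_erase.2 ⟨hji, mem_univ j⟩)
  have := (mul_eq_zero.1 hterm).resolve_left (abs_ne_zero.2 hij)
  linarith

theorem sum_erase_abs_eq_abs_diag_of_mulVec_eq_zero (hvi : v i ≠ 0) :
    ∑ j ∈ univ.erase i, |M i j| = |M i i| := by
  have hgap := (sum_erase_abs_mul_sub_eq_zero_of_mulVec_eq_zero hMv hdom hmax).2
  have := (mul_eq_zero.1 hgap).resolve_right (abs_ne_zero.2 hvi)
  linarith

end Matrix

theorem Fin.last_mem_of_forall_rel_imp {α : Type*} {s : ℕ} {c : Fin (s + 1) → α}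
    {r : α → α → Prop} (hc : ∀ k : Fin s, r (c k.castSucc) (c k.succ)) {p : α → Prop}
    (hp : ∀ a b, p a → r a b → p b) (h0 : p (c 0)) : p (c (Fin.last s)) := by
  induction (Fin.last s) using Fin.induction with
  | zero => exact h0
  | succ k ih => exact hp _ _ ih (hc k)

theorem row_dominant_chain_det_ne_zero_general {n : ℕ} (M : Matrix (Fin n) (Fin n) ℝ)
    (J : Set (Fin n))
    (hJdef : J = {i | ∑ j ∈ Finset.univ.erase i, |M i j| < |M i i|})
    (hdom : ∀ i, ∑ j ∈ Finset.univ.erase i, |M i j| ≤ |M i i|)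
    (hchain : ∀ i ∉ J, ∃ (s : ℕ) (c : Fin (s + 1) → Fin n),
      c 0 = i ∧ (∀ k : Fin s, M (c k.castSucc) (c k.succ) ≠ 0) ∧ c (Fin.last s) ∈ J) :
    M.det ≠ 0 := by
  intro hdet
  obtain ⟨v, hv, hMv⟩ := Matrix.exists_mulVec_eq_zero_iff.2 hdet
  obtain ⟨j₀, hj₀⟩ := Function.ne_iff.1 hv
  have : Nonempty (Fin n) := ⟨j₀⟩
  obtain ⟨i, hmax⟩ := Finite.exists_max fun j => |v j|
  have hvi : v i ≠ 0 := abs_pos.1 ((abs_pos.2 hj₀).trans_le (hmax j₀))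
  have hmax_of_eq {j} (hj : |v j| = |v i|) (k) : |v k| ≤ |v j| := (hmax k).trans_eq hj.symm
  have hnotJ {j} (hj : |v j| = |v i|) : j ∉ J := by
    rw [hJdef]
    refine (Matrix.sum_erase_abs_eq_abs_diag_of_mulVec_eq_zero hMv (hdom j)
      (hmax_of_eq hj) ?_).not_lt
    rwa [← abs_ne_zero, hj, abs_ne_zero]
  obtain ⟨s, c, rfl, hstep, hlast⟩ := hchain _ (hnotJ rfl)
  refine hnotJ (Fin.last_mem_of_forall_rel_imp (r := fun a b => M a b ≠ 0) hstep
    (p := fun j => |v j| = |v (c 0)|) (fun a b ha hab => ?_) rfl) hlast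
  exact (Matrix.abs_eq_of_mulVec_eq_zero_of_ne_zero hMv (hdom a) (hmax_of_eq ha) hab).trans ha

/-- A row diagonally dominant real matrix whose set `J` of strictly
diagonally dominant rows is nonempty, and such that every row outside `J` is connected
to `J` by a chain of nonzero entries, is nonsingular. -/
theorem row_dominant_chain_det_ne_zero {n : ℕ} (M : Matrix (Fin n) (Fin n) ℝ)
    (J : Set (Fin n))
    (hJdef : J = {i | ∑ j ∈ Finset.univ.erase i, |M i j| < |M i i|})
    (hdom : ∀ i, ∑ j ∈ Finset.univ.erase i, |M i j| ≤ |M i i|)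
    (hJne : J.Nonempty)
    (hchain : ∀ i ∉ J, ∃ (s : ℕ) (c : Fin (s + 1) → Fin n),
      c 0 = i ∧ (∀ k : Fin s, M (c k.castSucc) (c k.succ) ≠ 0) ∧ c (Fin.last s) ∈ J) :
    M.det ≠ 0 :=
  row_dominant_chain_det_ne_zero_general M J hJdef hdom hchain
end

section
/- In the graph setting, under the spanning-tree assumption, the matrix ν₁L + ν₂B is nonsingular (its determinant is nonzero). -/
/-!
Maximum principle. If `(ν₁ L + ν₂ B) v = 0` with `v ≠ 0`, let `m = max |vᵢ| > 0`. In a row `i`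
with `|vᵢ| = m` the diagonal entry `ν₁ dᵢ + ν₂ bᵢ` dominates the off-diagonal ones, so the row
equation forces `bᵢ = 0` and `|vⱼ| = m` for every neighbour `j` of `i`. The set where `|v|` is
maximal is therefore closed along edges and contains no pinned vertex, contradicting the
existence of a path from every vertex to a pinned one.
-/

open Finset

/-- One row of the maximum principle; `x` stands for the entry of `v` at the row's own index. -/
theorem eq_zero_and_abs_eq_of_row_eq {ι : Type*} [Fintype ι] {p v : ι → ℝ} {w x : ℝ}
    (hp : ∀ j, 0 ≤ p j) (hw : 0 ≤ w) (hrow : (∑ j, p j + w) * x = ∑ j, p j * v j)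
    (hmax : ∀ j, |v j| ≤ |x|) (hx : x ≠ 0) :
    w = 0 ∧ ∀ j, p j ≠ 0 → |v j| = |x| := by
  have hgap : ∀ j, 0 ≤ p j * (|x| - |v j|) := fun j => mul_nonneg (hp j) (sub_nonneg.2 (hmax j))
  have hsum : w * |x| + ∑ j, p j * (|x| - |v j|) ≤ 0 :=
    calc w * |x| + ∑ j, p j * (|x| - |v j|) = |(∑ j, p j + w) * x| - ∑ j, |p j * v j| := by
          simp only [abs_mul, abs_of_nonneg (hp _),
            abs_of_nonneg (add_nonneg (sum_nonneg fun j _ => hp j) hw), mul_sub, sum_sub_distrib,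
            ← sum_mul]
          ring
      _ = |∑ j, p j * v j| - ∑ j, |p j * v j| := by rw [hrow]
      _ ≤ 0 := sub_nonpos.2 (abs_sum_le_sum_abs _ _)
  have hgap_sum : 0 ≤ ∑ j, p j * (|x| - |v j|) := sum_nonneg fun j _ => hgap j
  have hw0 : w * |x| = 0 := le_antisymm (by linarith) (by positivity)
  have hgap0 : ∑ j, p j * (|x| - |v j|) = 0 :=
    le_antisymm (by linarith [mul_nonneg hw (abs_nonneg x)]) hgap_sum
  refine ⟨(mul_eq_zero.1 hw0).resolve_right (abs_ne_zero.2 hx), fun j hj => ?_⟩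
  have := (sum_eq_zero_iff_of_nonneg fun j _ => hgap j).1 hgap0 j (mem_univ j)
  linarith [(mul_eq_zero.1 this).resolve_left hj]

namespace Matrix

variable {ι : Type*} [Fintype ι] [DecidableEq ι]

def laplacian (P : Matrix ι ι ℝ) : Matrix ι ι ℝ :=
  diagonal (fun i => ∑ j, P i j) - P

theorem smul_laplacian (c : ℝ) (P : Matrix ι ι ℝ) : c • laplacian P = laplacian (c • P) := by
  simp only [laplacian, smul_sub, smul_apply, smul_eq_mul, ← mul_sum]
  rw [← diagonal_smul]
  rfl

theorem laplacian_add_diagonal_mulVec_apply (P : Matrix ι ι ℝ) (w v : ι → ℝ) (i : ι) :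
    ((laplacian P + diagonal w) *ᵥ v) i = (∑ j, P i j + w i) * v i - ∑ j, P i j * v j := by
  rw [laplacian, add_mulVec, sub_mulVec]
  simp only [Pi.add_apply, Pi.sub_apply, mulVec_diagonal]
  simp only [mulVec, dotProduct]
  ring

theorem det_laplacian_add_diagonal_ne_zero
    {P : Matrix ι ι ℝ} {w : ι → ℝ} (hP : ∀ i j, 0 ≤ P i j) (hw : ∀ i, 0 ≤ w i)
    (hreach : ∀ i, ∃ j, Relation.ReflTransGen (fun k l => P k l ≠ 0) i j ∧ 0 < w j) :
    (laplacian P + diagonal w).det ≠ 0 := by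
  intro hdet
  obtain ⟨v, hv0, hv⟩ := exists_mulVec_eq_zero_iff.2 hdet
  obtain ⟨i₀, hi₀⟩ := Function.ne_iff.1 hv0
  have : Nonempty ι := ⟨i₀⟩
  obtain ⟨imax, himax⟩ := Finite.exists_max fun i => |v i|
  have hmpos : 0 < |v imax| := (abs_pos.2 hi₀).trans_le (himax i₀)
  have hrow : ∀ i, |v i| = |v imax| → w i = 0 ∧ ∀ j, P i j ≠ 0 → |v j| = |v imax| := by
    intro i hi
    have heq : (∑ j, P i j + w i) * v i = ∑ j, P i j * v j := by
      have := laplacian_add_diagonal_mulVec_apply P w v i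
      rw [hv, Pi.zero_apply] at this
      linarith
    rw [← hi]
    exact eq_zero_and_abs_eq_of_row_eq (hP i) (hw i) heq (hi ▸ himax) (abs_pos.1 (hi ▸ hmpos))
  have hclosed : ∀ j, Relation.ReflTransGen (fun k l => P k l ≠ 0) imax j → |v j| = |v imax| := by
    intro j hpath
    induction hpath with
    | refl => rfl
    | tail _ hkl ih => exact (hrow _ ih).2 _ hkl
  obtain ⟨j, hpath, hwj⟩ := hreach imax
  exact hwj.ne' (hrow j (hclosed j hpath)).1

end Matrix

theorem Relation.ReflTransGen.of_fin_chain {α : Type*} {r : α → α → Prop} {s : ℕ}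
    {c : Fin (s + 1) → α} (hc : ∀ k : Fin s, r (c k.castSucc) (c k.succ)) :
    Relation.ReflTransGen r (c 0) (c (Fin.last s)) := by
  suffices ∀ k, Relation.ReflTransGen r (c 0) (c k) from this _
  intro k
  induction k using Fin.induction with
  | zero => exact .refl
  | succ k ih => exact ih.tail (hc k)

theorem pinned_laplacian_nonsingular_general {N : ℕ}
    (A : Matrix (Fin N) (Fin N) ℝ)
    (hA : ∀ i j, 0 ≤ A i j)
    (b : Fin N → ℝ) (hb : ∀ i, 0 ≤ b i)
    (ν₁ ν₂ : ℝ) (hν₁ : 0 < ν₁) (hν₂ : 0 < ν₂)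
    (d : Fin N → ℝ) (hd : ∀ i, d i = ∑ j, A i j)
    (L : Matrix (Fin N) (Fin N) ℝ) (hL : L = Matrix.diagonal d - A)
    (hspan : ∀ i, b i = 0 → ∃ (s : ℕ) (c : Fin (s + 1) → Fin N),
      c 0 = i ∧ (∀ k : Fin s, A (c k.castSucc) (c k.succ) ≠ 0) ∧ 0 < b (c (Fin.last s))) :
    (ν₁ • L + ν₂ • Matrix.diagonal b).det ≠ 0 := by
  have hL' : L = Matrix.laplacian A := by rw [hL, funext hd]; rfl
  rw [hL', Matrix.smul_laplacian, ← Matrix.diagonal_smul]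
  refine Matrix.det_laplacian_add_diagonal_ne_zero
    (fun i j => mul_nonneg hν₁.le (hA i j)) (fun i => mul_nonneg hν₂.le (hb i)) fun i => ?_
  rcases (hb i).eq_or_lt with hbi | hbi
  · obtain ⟨s, c, rfl, hedge, hpinned⟩ := hspan i hbi.symm
    refine ⟨c (Fin.last s), .of_fin_chain fun k => ?_, mul_pos hν₂ hpinned⟩
    exact mul_ne_zero hν₁.ne' (hedge k)
  · exact ⟨i, .refl, mul_pos hν₂ hbi⟩

/-- In the graph setting, under the spanning-tree assumption, the
matrix `ν₁ L + ν₂ B` is nonsingular. -/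
theorem pinned_laplacian_nonsingular {N : ℕ} (hN : 1 ≤ N)
    (A : Matrix (Fin N) (Fin N) ℝ)
    (hA : ∀ i j, 0 ≤ A i j) (hAdiag : ∀ i, A i i = 0)
    (b : Fin N → ℝ) (hb : ∀ i, 0 ≤ b i)
    (ν₁ ν₂ : ℝ) (hν₁ : 0 < ν₁) (hν₂ : 0 < ν₂)
    (d : Fin N → ℝ) (hd : ∀ i, d i = ∑ j, A i j)
    (L : Matrix (Fin N) (Fin N) ℝ) (hL : L = Matrix.diagonal d - A)
    (hpin : ∃ i, 0 < b i)
    (hspan : ∀ i, b i = 0 → ∃ (s : ℕ) (c : Fin (s + 1) → Fin N),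
      c 0 = i ∧ (∀ k : Fin s, A (c k.castSucc) (c k.succ) ≠ 0) ∧ 0 < b (c (Fin.last s))) :
    (ν₁ • L + ν₂ • Matrix.diagonal b).det ≠ 0 :=
  pinned_laplacian_nonsingular_general A hA b hb ν₁ ν₂ hν₁ hν₂ d hd L hL hspan
end

section
/- In the graph setting, under the spanning-tree assumption, every entry of the inverse matrix (ν₁L + ν₂B)^{-1} is nonnegative, and the vector q := (ν₁L + ν₂B)^{-1} 1 (where 1 ∈ ℝ^N is the all-ones vector) has all entries strictly positive. -/
/-!
Write `M = ν₁ L + ν₂ B`. Entrywise nonnegativity of `M⁻¹` is a discrete minimum principle: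
if `M x ≥ 0` and `x` attains a negative minimum `m`, then at every minimiser `i` the Laplacian
term `Σⱼ aᵢⱼ (xᵢ - xⱼ)` is `≤ 0`, which forces `bᵢ = 0` and `xⱼ = m` for all neighbours `j`.
The minimisers are therefore closed under edges, so following a path to a pinned node produces a
minimiser with `b > 0`, a contradiction. Applied to the columns of `M⁻¹` (for which `M x` is a
standard basis vector) this gives `M⁻¹ ≥ 0`. Then `qᵢ = Σⱼ (M⁻¹)ᵢⱼ ≥ 0`, and `qᵢ = 0` would make
row `i` of `M⁻¹` vanish, contradicting `M⁻¹ M = 1`.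
-/

open Finset Relation

lemma Relation.reflTransGen_of_fin_chain {α : Type*} {r : α → α → Prop} {s : ℕ}
    (c : Fin (s + 1) → α) (h : ∀ k : Fin s, r (c k.castSucc) (c k.succ)) (k : Fin (s + 1)) :
    ReflTransGen r (c 0) (c k) := by
  induction k using Fin.induction with
  | zero => rfl
  | succ k ih => exact ih.tail (h k)

section WeightedSum

variable {ι : Type*} [Fintype ι] {a x : ι → ℝ} {i : ι}

lemma sum_mul_sub_nonpos_of_forall_le (ha : ∀ j, 0 ≤ a j) (hmin : ∀ j, x i ≤ x j) :
    ∑ j, a j * (x i - x j) ≤ 0 :=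
  sum_nonpos fun j _ => mul_nonpos_of_nonneg_of_nonpos (ha j) (sub_nonpos.2 (hmin j))

lemma eq_of_sum_mul_sub_eq_zero (ha : ∀ j, 0 ≤ a j) (hmin : ∀ j, x i ≤ x j)
    (hsum : ∑ j, a j * (x i - x j) = 0) {j : ι} (haj : a j ≠ 0) : x j = x i := by
  have hterm := (sum_eq_zero_iff_of_nonpos fun k _ =>
    mul_nonpos_of_nonneg_of_nonpos (ha k) (sub_nonpos.2 (hmin k))).1 hsum j (mem_univ j)
  exact (sub_eq_zero.1 ((mul_eq_zero.1 hterm).resolve_left haj)).symm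

end WeightedSum

namespace Matrix

variable {ι : Type*} [Fintype ι] [DecidableEq ι]

def weightedLaplacian (A : Matrix ι ι ℝ) : Matrix ι ι ℝ :=
  diagonal (fun i => ∑ j, A i j) - A

lemma weightedLaplacian_smul (r : ℝ) (A : Matrix ι ι ℝ) :
    weightedLaplacian (r • A) = r • weightedLaplacian A := by
  simp only [weightedLaplacian, smul_sub, ← diagonal_smul, smul_apply, smul_eq_mul, ← mul_sum]
  rfl

lemma weightedLaplacian_add_diagonal_mulVec_apply (A : Matrix ι ι ℝ) (c x : ι → ℝ) (i : ι) :
    ((weightedLaplacian A + diagonal c) *ᵥ x) i = ∑ j, A i j * (x i - x j) + c i * x i := by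
  rw [weightedLaplacian, add_mulVec, sub_mulVec, Pi.add_apply, Pi.sub_apply, mulVec_diagonal,
    mulVec_diagonal]
  simp only [mulVec, dotProduct, sum_mul, mul_sub, sum_sub_distrib]

theorem nonneg_of_weightedLaplacian_add_diagonal_mulVec_nonneg {A : Matrix ι ι ℝ} {c x : ι → ℝ}
    (hA : ∀ i j, 0 ≤ A i j) (hc : ∀ i, 0 ≤ c i)
    (hreach : ∀ i, ∃ j, ReflTransGen (fun i j => A i j ≠ 0) i j ∧ 0 < c j)
    (hx : 0 ≤ (weightedLaplacian A + diagonal c) *ᵥ x) : 0 ≤ x := by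
  by_contra hneg
  obtain ⟨i₁, hi₁⟩ : ∃ i, x i < 0 := by simpa [Pi.le_def] using hneg
  have : Nonempty ι := ⟨i₁⟩
  obtain ⟨i₀, hmin⟩ := Finite.exists_min x
  have hm : x i₀ < 0 := (hmin i₁).trans_lt hi₁
  have hminimiser : ∀ i, x i = x i₀ → c i = 0 ∧ ∀ j, A i j ≠ 0 → x j = x i₀ := by
    intro i hi
    have hmin_i : ∀ j, x i ≤ x j := fun j => hi ▸ hmin j
    have hlap := sum_mul_sub_nonpos_of_forall_le (hA i) hmin_i
    have hy := hx i
    rw [Pi.zero_apply, weightedLaplacian_add_diagonal_mulVec_apply] at hy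
    have hci : c i = 0 := by nlinarith [hc i]
    refine ⟨hci, fun j hij => hi ▸ eq_of_sum_mul_sub_eq_zero (hA i) hmin_i ?_ hij⟩
    rw [hci, zero_mul, add_zero] at hy
    exact le_antisymm hlap hy
  have hclosed : ∀ j, ReflTransGen (fun i j => A i j ≠ 0) i₀ j → x j = x i₀ := by
    intro j hpath
    induction hpath with
    | refl => rfl
    | tail _ hstep ih => exact (hminimiser _ ih).2 _ hstep
  obtain ⟨j, hpath, hcj⟩ := hreach i₀
  exact hcj.ne' (hminimiser j (hclosed j hpath)).1

lemma inv_nonneg_of_mulVec_nonneg {M : Matrix ι ι ℝ} (hM : IsUnit M.det)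
    (h : ∀ x, 0 ≤ M *ᵥ x → 0 ≤ x) (i j : ι) : 0 ≤ M⁻¹ i j := by
  have hcol : M *ᵥ (M⁻¹ *ᵥ Pi.single j 1) = Pi.single j 1 := by
    rw [mulVec_mulVec, mul_nonsing_inv _ hM, one_mulVec]
  have hnonneg := h _ (hcol ▸ Pi.single_nonneg.2 zero_le_one) i
  rwa [mulVec_single_one, col_apply] at hnonneg

lemma inv_mulVec_one_pos {M : Matrix ι ι ℝ} (hM : IsUnit M.det)
    (hnonneg : ∀ i j, 0 ≤ M⁻¹ i j) (i : ι) : 0 < (M⁻¹ *ᵥ fun _ => (1 : ℝ)) i := by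
  have hsum : (M⁻¹ *ᵥ fun _ => (1 : ℝ)) i = ∑ j, M⁻¹ i j := by simp [mulVec, dotProduct]
  rw [hsum]
  refine (sum_nonneg fun j _ => hnonneg i j).lt_of_ne fun hzero => ?_
  have hrow : ∀ j, M⁻¹ i j = 0 := fun j =>
    (sum_eq_zero_iff_of_nonneg fun j _ => hnonneg i j).1 hzero.symm j (mem_univ j)
  simpa [mul_apply, hrow] using congrFun (congrFun (nonsing_inv_mul M hM) i) i

end Matrix

open Matrix

theorem pinned_laplacian_inverse_nonneg_general {N : ℕ}
    (A : Matrix (Fin N) (Fin N) ℝ)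
    (hA : ∀ i j, 0 ≤ A i j)
    (b : Fin N → ℝ) (hb : ∀ i, 0 ≤ b i)
    (ν₁ ν₂ : ℝ) (hν₁ : 0 < ν₁) (hν₂ : 0 < ν₂)
    (d : Fin N → ℝ) (hd : ∀ i, d i = ∑ j, A i j)
    (L : Matrix (Fin N) (Fin N) ℝ) (hL : L = Matrix.diagonal d - A)
    (hspan : ∀ i, b i = 0 → ∃ (s : ℕ) (c : Fin (s + 1) → Fin N),
      c 0 = i ∧ (∀ k : Fin s, A (c k.castSucc) (c k.succ) ≠ 0) ∧ 0 < b (c (Fin.last s)))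
    (LB : Matrix (Fin N) (Fin N) ℝ)
    (hLB : LB = ν₁ • L + ν₂ • Matrix.diagonal b)
    (hinv : IsUnit LB.det) :
    (∀ i j, 0 ≤ LB⁻¹ i j) ∧ (∀ i, 0 < (Matrix.mulVec LB⁻¹ (fun _ => (1 : ℝ))) i) := by
  obtain rfl : d = fun i => ∑ j, A i j := funext hd
  have hLB' : LB = weightedLaplacian (ν₁ • A) + diagonal (ν₂ • b) := by
    rw [hLB, hL, weightedLaplacian_smul, diagonal_smul, weightedLaplacian]
  have hreach : ∀ i, ∃ j, ReflTransGen (fun i j => (ν₁ • A) i j ≠ 0) i j ∧ 0 < (ν₂ • b) j := by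
    intro i
    rcases (hb i).eq_or_lt with hbi | hbi
    · obtain ⟨s, c, rfl, hstep, hlast⟩ := hspan _ hbi.symm
      exact ⟨c (Fin.last s), reflTransGen_of_fin_chain c
        (fun k => smul_ne_zero hν₁.ne' (hstep k)) _, mul_pos hν₂ hlast⟩
    · exact ⟨i, .refl, mul_pos hν₂ hbi⟩
  have hnonneg := inv_nonneg_of_mulVec_nonneg hinv fun x hx =>
    nonneg_of_weightedLaplacian_add_diagonal_mulVec_nonneg
      (fun i j => smul_nonneg hν₁.le (hA i j)) (fun i => smul_nonneg hν₂.le (hb i)) hreach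
      (hLB' ▸ hx)
  exact ⟨hnonneg, inv_mulVec_one_pos hinv hnonneg⟩

/-- In the graph setting, under the spanning-tree assumption, the
inverse `(ν₁ L + ν₂ B)⁻¹` is entrywise nonnegative, and `q = (ν₁ L + ν₂ B)⁻¹ 𝟙` has all
entries strictly positive. -/
theorem pinned_laplacian_inverse_nonneg {N : ℕ} (hN : 1 ≤ N)
    (A : Matrix (Fin N) (Fin N) ℝ)
    (hA : ∀ i j, 0 ≤ A i j) (hAdiag : ∀ i, A i i = 0)
    (b : Fin N → ℝ) (hb : ∀ i, 0 ≤ b i)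
    (ν₁ ν₂ : ℝ) (hν₁ : 0 < ν₁) (hν₂ : 0 < ν₂)
    (d : Fin N → ℝ) (hd : ∀ i, d i = ∑ j, A i j)
    (L : Matrix (Fin N) (Fin N) ℝ) (hL : L = Matrix.diagonal d - A)
    (hpin : ∃ i, 0 < b i)
    (hspan : ∀ i, b i = 0 → ∃ (s : ℕ) (c : Fin (s + 1) → Fin N),
      c 0 = i ∧ (∀ k : Fin s, A (c k.castSucc) (c k.succ) ≠ 0) ∧ 0 < b (c (Fin.last s)))
    (LB : Matrix (Fin N) (Fin N) ℝ)
    (hLB : LB = ν₁ • L + ν₂ • Matrix.diagonal b)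
    (hinv : IsUnit LB.det) :
    (∀ i j, 0 ≤ LB⁻¹ i j) ∧ (∀ i, 0 < (Matrix.mulVec LB⁻¹ (fun _ => (1 : ℝ))) i) :=
  pinned_laplacian_inverse_nonneg_general A hA b hb ν₁ ν₂ hν₁ hν₂ d hd L hL hspan LB hLB hinv
end

section
/- Let Δ be a real m×m matrix, β > 0, and P₁ a real symmetric m×m matrix satisfying Δᵀ P₁ + P₁ Δ = −β I. Let l ∈ ℝ^m, let r : ℝ → ℝ^N and E₁ : ℝ → ℝ^{N×m} be differentiable with Ė₁(t) = E₁(t) Δᵀ + r(t) lᵀ for all t, and define V₅(t) = ½ tr(E₁(t) P₁ E₁(t)ᵀ). Then for every t, the derivative of V₅ satisfies V̇₅(t) ≤ −(β/2) ‖E₁(t)‖_F² + σ̄(P₁) ‖l‖ ‖r(t)‖ ‖E₁(t)‖_F, where ‖·‖_F is the Frobenius norm, ‖·‖ the Euclidean norm, and σ̄(P₁) the largest singular value (operator norm) of P₁. -/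
/-!
Since `P₁` is symmetric, `V̇₅ = tr(Ė₁ P₁ E₁ᵀ)`. Substituting `Ė₁ = E₁ Δᵀ + r lᵀ` splits this
into a quadratic part, which the Lyapunov equation turns into `-(β/2) tr(E₁ E₁ᵀ) = -(β/2) ‖E₁‖_F²`,
and the cross term `tr(r lᵀ P₁ E₁ᵀ) = ⟪r, E₁ P₁ l⟫`, which Cauchy–Schwarz together with
`‖E₁ x‖ ≤ ‖E₁‖_F ‖x‖` and `‖P₁ l‖ ≤ σ̄(P₁) ‖l‖` bounds by `σ̄(P₁) ‖l‖ ‖r‖ ‖E₁‖_F`.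
-/

open scoped Matrix

-- Equip matrices with the Frobenius norm (so that `‖E₁ t‖` below is `‖E₁ t‖_F`).
attribute [local instance] Matrix.frobeniusNormedAddCommGroup Matrix.frobeniusNormedSpace

/-- The maximum singular value `σ̄(P)` of a real matrix, i.e. its operator norm as a map
on Euclidean space. -/
noncomputable def sigmaMax {m : ℕ} (P : Matrix (Fin m) (Fin m) ℝ) : ℝ :=
  ‖LinearMap.toContinuousLinearMap (Matrix.toEuclideanLin P)‖

namespace Matrix

section Trace

variable {R : Type*} [CommSemiring R] {n m : Type*} [Fintype n] [Fintype m]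

theorem trace_mul_mul_transpose_comm {P : Matrix m m R} (hP : P.IsSymm) (X Y : Matrix n m R) :
    (X * P * Yᵀ).trace = (Y * P * Xᵀ).trace := by
  rw [← trace_transpose, transpose_mul, transpose_mul, transpose_transpose, hP.eq,
    Matrix.mul_assoc]

theorem trace_mul_transpose_mul_transpose (X : Matrix n m R) (Q : Matrix m m R) :
    (X * Qᵀ * Xᵀ).trace = (X * Q * Xᵀ).trace := by
  rw [← trace_transpose, transpose_mul, transpose_mul, transpose_transpose, transpose_transpose,
    Matrix.mul_assoc]

theorem trace_vecMulVec_mul_mul_transpose (u : n → R) (v : m → R) (P : Matrix m m R)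
    (X : Matrix n m R) : (vecMulVec u v * P * Xᵀ).trace = u ⬝ᵥ X *ᵥ (Pᵀ *ᵥ v) := by
  rw [vecMulVec_mul, vecMulVec_mul, trace_vecMulVec, vecMul_transpose, mulVec_transpose]

end Trace

theorem trace_mul_mul_transpose_of_lyapunov {n m : Type*} [Fintype n] [Fintype m]
    [DecidableEq m] {Δ P : Matrix m m ℝ} {β : ℝ} (hP : P.IsSymm)
    (hLyap : Δᵀ * P + P * Δ = -(β • 1)) (X : Matrix n m ℝ) :
    (X * Δᵀ * P * Xᵀ).trace = -(β / 2) * (X * Xᵀ).trace := by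
  have hswap : (X * (P * Δ) * Xᵀ).trace = (X * (Δᵀ * P) * Xᵀ).trace := by
    rw [← trace_mul_transpose_mul_transpose X (P * Δ), transpose_mul, hP.eq]
  have hsum : (X * (Δᵀ * P) * Xᵀ).trace + (X * (P * Δ) * Xᵀ).trace = -β * (X * Xᵀ).trace := by
    rw [← trace_add, ← Matrix.add_mul, ← Matrix.mul_add, hLyap]
    simp
  rw [Matrix.mul_assoc X]
  linarith

theorem frobenius_norm_sq_eq_trace {n m : Type*} [Fintype n] [Fintype m] (X : Matrix n m ℝ) :
    ‖X‖ ^ 2 = (X * Xᵀ).trace := by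
  rw [frobenius_norm_def, ← Real.rpow_natCast, ← Real.rpow_mul (by positivity)]
  norm_num [trace, mul_apply, sq]

theorem frobenius_norm_mulVec_le {𝕜 : Type*} [RCLike 𝕜] {n m : Type*} [Fintype n] [Fintype m]
    (X : Matrix n m 𝕜) (v : m → 𝕜) : ‖WithLp.toLp 2 (X *ᵥ v)‖ ≤ ‖X‖ * ‖WithLp.toLp 2 v‖ := by
  rw [← frobenius_norm_replicateCol (ι := Unit), ← frobenius_norm_replicateCol (ι := Unit),
    replicateCol_mulVec]
  exact frobenius_norm_mul _ _

theorem norm_mulVec_le_sigmaMax {k : ℕ} (P : Matrix (Fin k) (Fin k) ℝ)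
    (v : EuclideanSpace ℝ (Fin k)) : ‖WithLp.toLp 2 (P *ᵥ v)‖ ≤ sigmaMax P * ‖v‖ :=
  (LinearMap.toContinuousLinearMap (toEuclideanLin P)).le_opNorm v

theorem trace_vecMulVec_mul_mul_transpose_le {n : Type*} [Fintype n] {k : ℕ}
    {P : Matrix (Fin k) (Fin k) ℝ} (hP : P.IsSymm) (u : EuclideanSpace ℝ n)
    (v : EuclideanSpace ℝ (Fin k)) (X : Matrix n (Fin k) ℝ) :
    (vecMulVec u v * P * Xᵀ).trace ≤ sigmaMax P * ‖v‖ * ‖u‖ * ‖X‖ := by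
  set w := WithLp.toLp 2 (X *ᵥ (P *ᵥ v))
  have hCS : u ⬝ᵥ X *ᵥ (P *ᵥ v) ≤ ‖w‖ * ‖u‖ := by
    simpa [w, PiLp.inner_apply, dotProduct] using real_inner_le_norm w u
  have hw : ‖w‖ ≤ ‖X‖ * (sigmaMax P * ‖v‖) :=
    (frobenius_norm_mulVec_le X _).trans <|
      mul_le_mul_of_nonneg_left (norm_mulVec_le_sigmaMax P v) (norm_nonneg X)
  rw [trace_vecMulVec_mul_mul_transpose, hP.eq]
  calc u ⬝ᵥ X *ᵥ (P *ᵥ v) ≤ ‖w‖ * ‖u‖ := hCS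
    _ ≤ ‖X‖ * (sigmaMax P * ‖v‖) * ‖u‖ := by gcongr
    _ = sigmaMax P * ‖v‖ * ‖u‖ * ‖X‖ := by ring

section Derivative

variable {𝕜 : Type*} [RCLike 𝕜] {n m : Type*} [Fintype n] [Fintype m]

noncomputable def traceForm (P : Matrix m m 𝕜) : Matrix n m 𝕜 →L[𝕜] Matrix n m 𝕜 →L[𝕜] 𝕜 :=
  LinearMap.toContinuousBilinearMap <| LinearMap.mk₂ 𝕜 (fun X Y => (X * P * Yᵀ).trace)
    (fun X X' Y => by rw [Matrix.add_mul, Matrix.add_mul, trace_add])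
    (fun c X Y => by rw [Matrix.smul_mul, Matrix.smul_mul, trace_smul])
    (fun X Y Y' => by rw [transpose_add, Matrix.mul_add, trace_add])
    (fun c X Y => by rw [transpose_smul, Matrix.mul_smul, trace_smul])

theorem _root_.HasDerivAt.trace_mul_mul_transpose {E : 𝕜 → Matrix n m 𝕜} {E' : Matrix n m 𝕜}
    {t : 𝕜} (hE : HasDerivAt E E' t) (P : Matrix m m 𝕜) :
    HasDerivAt (fun s => (E s * P * (E s)ᵀ).trace)
      ((E t * P * E'ᵀ).trace + (E' * P * (E t)ᵀ).trace) t :=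
  (traceForm P).hasDerivAt_of_bilinear (fun _ => hE) (fun _ => hE)

end Derivative

end Matrix

theorem lyapunov_V5_derivative_bound_general {m N : ℕ}
    (Δ : Matrix (Fin m) (Fin m) ℝ) (β : ℝ)
    (P₁ : Matrix (Fin m) (Fin m) ℝ) (hP₁ : P₁.IsSymm)
    (hLyap : Δᵀ * P₁ + P₁ * Δ = -(β • (1 : Matrix (Fin m) (Fin m) ℝ)))
    (l : EuclideanSpace ℝ (Fin m))
    (r : ℝ → EuclideanSpace ℝ (Fin N))
    (E₁ : ℝ → Matrix (Fin N) (Fin m) ℝ)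
    (hE₁ : ∀ t : ℝ,
      HasDerivAt E₁ (E₁ t * Δᵀ + Matrix.vecMulVec (fun i => r t i) (fun k => l k)) t)
    (V₅ : ℝ → ℝ)
    (hV₅ : ∀ t : ℝ, V₅ t = (1 / 2) * Matrix.trace (E₁ t * P₁ * (E₁ t)ᵀ)) :
    ∀ t : ℝ, ∃ v : ℝ, HasDerivAt V₅ v t ∧
      v ≤ -(β / 2) * ‖E₁ t‖ ^ 2 + sigmaMax P₁ * ‖l‖ * ‖r t‖ * ‖E₁ t‖ := by
  intro t
  have hV := ((hE₁ t).trace_mul_mul_transpose P₁).const_mul (1 / 2 : ℝ)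
  rw [← funext hV₅] at hV
  refine ⟨_, hV, ?_⟩
  rw [Matrix.trace_mul_mul_transpose_comm hP₁ (E₁ t), Matrix.add_mul, Matrix.add_mul,
    Matrix.trace_add, Matrix.trace_mul_mul_transpose_of_lyapunov hP₁ hLyap,
    ← Matrix.frobenius_norm_sq_eq_trace]
  linarith [Matrix.trace_vecMulVec_mul_mul_transpose_le hP₁ (r t) l (E₁ t)]

/-- If `Δᵀ P₁ + P₁ Δ = -β I` with `P₁` symmetric, and
`Ė₁ = E₁ Δᵀ + r lᵀ`, then `V₅ = ½ tr(E₁ P₁ E₁ᵀ)` satisfies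
`V̇₅ ≤ -(β/2) ‖E₁‖_F² + σ̄(P₁) ‖l‖ ‖r‖ ‖E₁‖_F`. -/
theorem lyapunov_V5_derivative_bound {m N : ℕ}
    (Δ : Matrix (Fin m) (Fin m) ℝ) (β : ℝ) (hβ : 0 < β)
    (P₁ : Matrix (Fin m) (Fin m) ℝ) (hP₁ : P₁.IsSymm)
    (hLyap : Δᵀ * P₁ + P₁ * Δ = -(β • (1 : Matrix (Fin m) (Fin m) ℝ)))
    (l : EuclideanSpace ℝ (Fin m))
    (r : ℝ → EuclideanSpace ℝ (Fin N)) (hr : Differentiable ℝ r)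
    (E₁ : ℝ → Matrix (Fin N) (Fin m) ℝ)
    (hE₁ : ∀ t : ℝ,
      HasDerivAt E₁ (E₁ t * Δᵀ + Matrix.vecMulVec (fun i => r t i) (fun k => l k)) t)
    (V₅ : ℝ → ℝ)
    (hV₅ : ∀ t : ℝ, V₅ t = (1 / 2) * Matrix.trace (E₁ t * P₁ * (E₁ t)ᵀ)) :
    ∀ t : ℝ, ∃ v : ℝ, HasDerivAt V₅ v t ∧
      v ≤ -(β / 2) * ‖E₁ t‖ ^ 2 + sigmaMax P₁ * ‖l‖ * ‖r t‖ * ‖E₁ t‖ :=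
  lyapunov_V5_derivative_bound_general Δ β P₁ hP₁ hLyap l r E₁ hE₁ V₅ hV₅
end

section
/- Let β, κ, κ_w, κ₀, μ₁, g, γ₁, γ₂, γ₃ be real numbers and let K be the symmetric 5×5 arrowhead matrix with rows [β/2, 0, 0, 0, g], [0, κ, 0, 0, γ₁], [0, 0, κ_w, 0, γ₂], [0, 0, 0, κ₀, γ₃], [g, γ₁, γ₂, γ₃, μ₁]. Then K is positive definite if and only if β > 0, κ > 0, κ_w > 0, κ₀ > 0, and μ₁ > 2g²/β + γ₁²/κ + γ₂²/κ_w + γ₃²/κ₀. -/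
/-!
Reordered as a 2×2 block matrix, `K` has the diagonal block `D = diag(β/2, κ, κ_w, κ₀)`, the
column `v = (g, γ₁, γ₂, γ₃)` and the corner `μ₁`. A symmetric block matrix is positive definite
iff its upper-left block and the Schur complement of that block are, which here says `D ≻ 0` and
`μ₁ - vᵀ D⁻¹ v > 0`; the latter is the stated inequality since `g² / (β/2) = 2g²/β`.
-/

namespace Matrix

theorem posDef_submatrix_equiv {l m R : Type*} [Ring R] [PartialOrder R] [StarRing R]
    {M : Matrix m m R} (e : l ≃ m) :
    (M.submatrix e e).PosDef ↔ M.PosDef :=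
  ⟨fun h => by simpa using h.submatrix e.symm.injective, fun h => h.submatrix e.injective⟩

variable {m n K : Type*} [Fintype m] [Fintype n] [DecidableEq m]
  [Field K] [PartialOrder K] [StarRing K] [StarOrderedRing K]

theorem posDef_fromBlocks_iff {A : Matrix m m K} {B : Matrix m n K} {D : Matrix n n K} :
    (fromBlocks A B Bᴴ D).PosDef ↔ A.PosDef ∧ (D - Bᴴ * A⁻¹ * B).PosDef := by
  suffices h : ∀ hA : A.PosDef, (fromBlocks A B Bᴴ D).PosDef ↔ (D - Bᴴ * A⁻¹ * B).PosDef by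
    refine ⟨fun hM => ?_, fun ⟨hA, hS⟩ => (h hA).2 hS⟩
    have hA : A.PosDef := hM.submatrix Sum.inl_injective
    exact ⟨hA, (h hA).1 hM⟩
  intro hA
  have : Invertible A := hA.isUnit.invertible
  rw [posDef_iff_dotProduct_mulVec, IsHermitian.fromBlocks₁₁ _ _ hA.1,
    posDef_iff_dotProduct_mulVec]
  refine and_congr_right fun _ => ⟨fun h x hx => ?_, fun h w hw => ?_⟩
  · -- the test vector `(-A⁻¹ B x, x)` makes the square in `schur_complement_eq₁₁` vanish
    have hpos := h (x := -((A⁻¹ * B) *ᵥ x) ⊕ᵥ x) fun h0 => hx <| by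
      simpa using congrArg (· ∘ Sum.inr) h0
    rwa [dotProduct_mulVec, schur_complement_eq₁₁ B D _ _ hA.1, neg_add_cancel,
      dotProduct_zero, zero_add, ← dotProduct_mulVec] at hpos
  · rw [← Sum.elim_comp_inl_inr w, dotProduct_mulVec, schur_complement_eq₁₁ B D _ _ hA.1,
      ← dotProduct_mulVec, ← dotProduct_mulVec (star _)]
    by_cases hx : w ∘ Sum.inr = 0
    · have hy : w ∘ Sum.inl ≠ 0 := fun hy => hw <| by
        rw [← Sum.elim_comp_inl_inr w, hy, hx]; simp
      simpa [hx] using hA.dotProduct_mulVec_pos hy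
    · exact add_pos_of_nonneg_of_pos (hA.posSemidef.dotProduct_mulVec_nonneg _) (h hx)

theorem posDef_fromBlocks_diagonal_iff (d v : m → ℝ) (c : ℝ) :
    (fromBlocks (diagonal d) (replicateCol (Fin 1) v) (replicateRow (Fin 1) v)
      (of fun _ _ => c)).PosDef ↔ (∀ i, 0 < d i) ∧ ∑ i, v i ^ 2 / d i < c := by
  have hB : replicateRow (Fin 1) v = (replicateCol (Fin 1) v)ᴴ := by simp
  rw [hB, posDef_fromBlocks_iff, posDef_diagonal_iff]
  -- `(diagonal d)⁻¹` is the junk value `0` unless every `d i` is a unit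
  refine and_congr_right fun hd => ?_
  have hinv : (diagonal d)⁻¹ = diagonal fun i => (d i)⁻¹ :=
    inv_eq_left_inv <| by simp [inv_mul_cancel₀ (hd _).ne']
  have hS : of (fun _ _ => c) - (replicateCol (Fin 1) v)ᴴ * (diagonal d)⁻¹ *
      replicateCol (Fin 1) v = diagonal fun _ => c - ∑ i, v i ^ 2 / d i := by
    ext i j
    fin_cases i; fin_cases j
    simp [hinv, mul_apply, diagonal_apply, div_eq_mul_inv, pow_two, mul_right_comm]
  rw [hS, posDef_diagonal_iff]
  simp

end Matrix

open Matrix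

/-- The symmetric 5×5 arrowhead matrix `K` is positive definite iff
`β > 0`, `κ > 0`, `κ_w > 0`, `κ₀ > 0` and
`μ₁ > 2g²/β + γ₁²/κ + γ₂²/κ_w + γ₃²/κ₀`. -/
theorem arrowhead_posdef_iff (β κ κw κ₀ μ₁ g γ₁ γ₂ γ₃ : ℝ)
    (K : Matrix (Fin 5) (Fin 5) ℝ)
    (hK : K = !![β / 2, 0, 0, 0, g;
                 0, κ, 0, 0, γ₁;
                 0, 0, κw, 0, γ₂;
                 0, 0, 0, κ₀, γ₃;
                 g, γ₁, γ₂, γ₃, μ₁]) :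
    K.PosDef ↔ (0 < β ∧ 0 < κ ∧ 0 < κw ∧ 0 < κ₀ ∧
      2 * g ^ 2 / β + γ₁ ^ 2 / κ + γ₂ ^ 2 / κw + γ₃ ^ 2 / κ₀ < μ₁) := by
  have hblocks : K = (fromBlocks (diagonal ![β / 2, κ, κw, κ₀])
      (replicateCol (Fin 1) ![g, γ₁, γ₂, γ₃]) (replicateRow (Fin 1) ![g, γ₁, γ₂, γ₃])
      (of fun _ _ => μ₁)).submatrix finSumFinEquiv.symm finSumFinEquiv.symm := by
    subst hK
    ext i j
    fin_cases i <;> fin_cases j <;> rfl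
  have hg : g ^ 2 / (β / 2) = 2 * g ^ 2 / β := by ring
  rw [hblocks, posDef_submatrix_equiv, posDef_fromBlocks_diagonal_iff]
  simp [Fin.forall_fin_succ, Fin.sum_univ_four, hg, and_assoc]
end
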